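/- Let (X_t) be a non-negative strictly stationary sequence that is regularly varying with index α > 0 and spectral tail process (Θ_t), and assume the anti-clustering condition holds for u_n = x a_n for all x > 0. Set Y_t = Y Θ_t where Y is Pareto(α) independent of (Θ_t). Then Y_t → 0 almost surely as t → +∞; equivalently, Θ_t → 0 almost surely as t → +∞. -/

import Mathlib

/-!
Finite-dimensional convergence, tested on thickened indicators of window events, turns the
anti-clustering condition into `P(Y Θ_t > 1 for some t ≥ k) → 0` as `k → ∞`, so `Y Θ_t > 1`
only finitely often a.s. Since `Y` is independent of `Θ` and exceeds every level with positive
probability, `Θ_t > c` then happens only finitely often a.s. for each `c > 0`; non-negativity of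
`X` makes `Θ_t ≥ 0`.
-/

open MeasureTheory ProbabilityTheory Filter Topology

noncomputable section

variable {Ω : Type*} [MeasurableSpace Ω]

/-- `blockMax X a b ω = max_{a ≤ i ≤ b} X i ω` (junk value `0` if `b < a`). -/
def blockMax (X : ℤ → Ω → ℝ) (a b : ℤ) (ω : Ω) : ℝ :=
  ⨆ i : Finset.Icc a b, X i ω

/-- Conditional probability `P(B | A)` as a real number. -/
def condProb (μ : Measure Ω) (A B : Set Ω) : ℝ :=
  (ProbabilityTheory.cond μ A B).toReal

/-- Leadbetter's block quantity `θ_n = r_n P(X > u_n) / P(M_{r_n} > u_n)`. -/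
def thetaBlock (μ : Measure Ω) (X : ℤ → Ω → ℝ) (u : ℕ → ℝ) (r : ℕ → ℕ) (n : ℕ) : ℝ :=
  (r n : ℝ) * (μ {ω | X 0 ω > u n}).toReal
    / (μ {ω | blockMax X 1 (r n) ω > u n}).toReal

/-- The anti-clustering condition:
`lim_{k→∞} limsup_{n→∞} P(M_{k,r_n} > u_n ∣ X_0 > u_n) = 0`. -/
def AntiClustering (μ : Measure Ω) (X : ℤ → Ω → ℝ) (u : ℕ → ℝ) (r : ℕ → ℕ) : Prop :=
  Tendsto (fun k : ℕ =>
      limsup (fun n : ℕ =>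
        condProb μ {ω | X 0 ω > u n} {ω | blockMax X k (r n) ω > u n}) atTop)
    atTop (𝓝 0)

/-- The mixing condition `P(M_n ≤ u_n) − (P(M_{r_n} ≤ u_n))^{k_n} → 0`, `k_n = [n/r_n]`. -/
def MixingMax (μ : Measure Ω) (X : ℤ → Ω → ℝ) (u : ℕ → ℝ) (r : ℕ → ℕ) : Prop :=
  Tendsto (fun n : ℕ =>
      (μ {ω | blockMax X 1 n ω ≤ u n}).toReal
        - (μ {ω | blockMax X 1 (r n) ω ≤ u n}).toReal ^ (n / r n)) atTop (𝓝 0)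

/-- Strict stationarity of a `ℤ`-indexed real sequence. -/
def IsStationarySeq (μ : Measure Ω) (X : ℤ → Ω → ℝ) : Prop :=
  ∀ k : ℤ, Measure.map (fun ω (t : ℤ) => X (t + k) ω) μ
    = Measure.map (fun ω (t : ℤ) => X t ω) μ

/-- The right endpoint `x_F` of the marginal distribution of `X_0`, as an extended real. -/
def rightEndpoint (μ : Measure Ω) (X : ℤ → Ω → ℝ) : EReal :=
  sSup {y : EReal | ∃ s : ℝ, y = (s : EReal) ∧ 0 < μ {ω | X 0 ω > s}}

/-- `(X_t)` has extremal index `θ`: for every `τ > 0` there are thresholds `u_n(τ)` with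
`n P(X_0 > u_n(τ)) → τ` and `P(M_n ≤ u_n(τ)) → e^{−τθ}`. -/
def HasExtremalIndex (μ : Measure Ω) (X : ℤ → Ω → ℝ) (θ : ℝ) : Prop :=
  ∀ τ : ℝ, 0 < τ → ∃ u : ℕ → ℝ,
    Tendsto (fun n : ℕ => (n : ℝ) * (μ {ω | X 0 ω > u n}).toReal) atTop (𝓝 τ) ∧
    Tendsto (fun n : ℕ => (μ {ω | blockMax X 1 n ω ≤ u n}).toReal) atTop
      (𝓝 (Real.exp (-(τ * θ))))

/-- `(X_t)` is a regularly varying stationary sequence with index `α`, spectral tail process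
`(Θ_t)` and Pareto(α) variable `Y` (defined on a possibly different probability space `Ω'`):
for every `h ≥ 0`, the conditional law of `(X_t/x)_{|t|≤h}` given `|X_0| > x` converges weakly,
as `x → ∞`, to the law of `(Y Θ_t)_{|t|≤h}`, where `|Θ_0| = 1` a.s., `Y` is Pareto(α) and
`Y` is independent of `(Θ_t)`. -/
structure IsSpectralTail (μ : Measure Ω) {Ω' : Type*} [MeasurableSpace Ω'] (ν : Measure Ω')
    (X : ℤ → Ω → ℝ) (α : ℝ) (Θ : ℤ → Ω' → ℝ) (Y : Ω' → ℝ) : Prop where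
  alpha_pos : 0 < α
  theta_zero : ∀ᵐ ω ∂ν, |Θ 0 ω| = 1
  pareto_ge_one : ∀ᵐ ω ∂ν, 1 ≤ Y ω
  pareto_tail : ∀ y : ℝ, 1 < y → (ν {ω | Y ω > y}).toReal = y ^ (-α)
  indep : IndepFun Y (fun ω (t : ℤ) => Θ t ω) ν
  fdd_conv : ∀ h : ℕ, ∀ f : BoundedContinuousFunction (Fin (2 * h + 1) → ℝ) ℝ,
    Tendsto (fun x : ℝ =>
        ∫ ω, f (fun i => X (((i : ℕ) : ℤ) - (h : ℤ)) ω / x)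
          ∂(ProbabilityTheory.cond μ {ω | |X 0 ω| > x}))
      atTop
      (𝓝 (∫ ω, f (fun i => Y ω * Θ (((i : ℕ) : ℤ) - (h : ℤ)) ω) ∂ν))

open Metric Set

/-- The block `(z_t)_{|t| ≤ h}`, indexed by `Fin (2 * h + 1)` as in `IsSpectralTail.fdd_conv`. -/
def window (h : ℕ) (z : ℤ → ℝ) : Fin (2 * h + 1) → ℝ := fun i => z ((i : ℕ) - h)

lemma window_apply_add {h t : ℕ} (ht : t ≤ h) (z : ℤ → ℝ) :
    window h z ⟨t + h, by omega⟩ = z t := by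
  simp [window]

lemma measurable_window {X : ℤ → Ω → ℝ} (hmeas : ∀ t, Measurable (X t)) (h : ℕ) (x : ℝ) :
    Measurable fun ω => window h fun t => X t ω / x :=
  measurable_pi_lambda _ fun _ => (hmeas _).div_const x

lemma exists_forall_abs_sub_lt_of_mem_thickening {ι : Type*} [Fintype ι] {δ : ℝ}
    {E : Set (ι → ℝ)} {v : ι → ℝ} (hv : v ∈ thickening δ E) :
    ∃ w ∈ E, ∀ i, |v i - w i| < δ := by
  obtain ⟨w, hw, hvw⟩ := mem_thickening_iff.1 hv
  exact ⟨w, hw, fun i => (dist_le_pi_dist v w i).trans_lt hvw⟩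

lemma le_blockMax {S : Type*} (X : ℤ → S → ℝ) {a b t : ℤ} (hat : a ≤ t) (htb : t ≤ b) (ω : S) :
    X t ω ≤ blockMax X a b ω :=
  le_ciSup (f := fun i : Finset.Icc a b => X i ω) (finite_range _).bddAbove
    ⟨t, Finset.mem_Icc.2 ⟨hat, htb⟩⟩

lemma tendsto_atTop_of_tendsto_nat_mul_measureReal {μ : Measure Ω} [IsFiniteMeasure μ]
    {Z : Ω → ℝ} (hZ : ∀ s, μ {ω | Z ω > s} ≠ 0) {a : ℕ → ℝ}
    (ha : Tendsto (fun n : ℕ => (n : ℝ) * μ.real {ω | Z ω > a n}) atTop (𝓝 1)) :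
    Tendsto a atTop atTop := by
  have hp : Tendsto (fun n : ℕ => μ.real {ω | Z ω > a n}) atTop (𝓝 0) := by
    refine (ha.div_atTop tendsto_natCast_atTop_atTop).congr' ?_
    filter_upwards [eventually_ne_atTop 0] with n hn
    field_simp
  refine tendsto_atTop.2 fun C => ?_
  have hC : 0 < μ.real {ω | Z ω > C} := ENNReal.toReal_pos (hZ C) (measure_ne_top _ _)
  filter_upwards [hp.eventually (gt_mem_nhds hC)] with n hn
  by_contra! hlt
  exact hn.not_ge (measureReal_mono fun ω (hω : C < Z ω) => hlt.trans hω)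

lemma tendsto_zero_of_nonneg_of_forall_eventually_le {z : ℕ → ℝ} (h0 : ∀ t, 0 ≤ z t)
    (hle : ∀ j : ℕ, ∀ᶠ t in atTop, z t ≤ 1 / (j + 1)) : Tendsto z atTop (𝓝 0) := by
  refine tendsto_order.2 ⟨fun c hc => Eventually.of_forall fun t => hc.trans_le (h0 t),
    fun c hc => ?_⟩
  obtain ⟨j, hj⟩ := exists_nat_one_div_lt hc
  exact (hle j).mono fun t ht => ht.trans_lt hj

namespace IsSpectralTail

variable {μ : Measure Ω} {Ω' : Type*} [MeasurableSpace Ω'] {ν : Measure Ω'} {X : ℤ → Ω → ℝ}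
  {α : ℝ} {Θ : ℤ → Ω' → ℝ} {Y : Ω' → ℝ}

lemma tendsto_integral_window (hrv : IsSpectralTail μ ν X α Θ Y) (h : ℕ)
    (f : BoundedContinuousFunction (Fin (2 * h + 1) → ℝ) ℝ) :
    Tendsto (fun x : ℝ => ∫ ω, f (window h fun t => X t ω / x) ∂(μ[|{ω | |X 0 ω| > x}]))
      atTop (𝓝 (∫ ω, f (window h fun t => Y ω * Θ t ω) ∂ν)) :=
  hrv.fdd_conv h f

lemma tendsto_cond_univ [IsProbabilityMeasure ν] (hrv : IsSpectralTail μ ν X α Θ Y) :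
    Tendsto (fun x : ℝ => (μ[univ|{ω | |X 0 ω| > x}]).toReal) atTop (𝓝 1) := by
  simpa [integral_const, measureReal_def] using
    hrv.fdd_conv 0 (BoundedContinuousFunction.const _ (1 : ℝ))

lemma measure_abs_gt_ne_zero [IsProbabilityMeasure ν] (hrv : IsSpectralTail μ ν X α Θ Y) (s : ℝ) :
    μ {ω | |X 0 ω| > s} ≠ 0 := by
  intro hs
  have hzero : ∀ᶠ x in atTop, (μ[univ|{ω | |X 0 ω| > x}]).toReal = 0 := by
    filter_upwards [eventually_ge_atTop s] with x hx
    have : μ {ω | |X 0 ω| > x} = 0 := measure_mono_null (fun ω hω => hx.trans_lt hω) hs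
    simp [ProbabilityTheory.cond, Measure.restrict_eq_zero.2 this]
  exact one_ne_zero <| tendsto_nhds_unique hrv.tendsto_cond_univ <|
    tendsto_const_nhds.congr' (hzero.mono fun _ h => h.symm)

lemma integrable_window_div {P : Measure Ω} [IsFiniteMeasure P] (hmeas : ∀ t, Measurable (X t))
    {h : ℕ} (f : BoundedContinuousFunction (Fin (2 * h + 1) → ℝ) ℝ) (x : ℝ) :
    Integrable (fun ω => f (window h fun t => X t ω / x)) P :=
  .of_bound (f.continuous.measurable.comp (measurable_window hmeas h x)).aestronglyMeasurable
    ‖f‖ (ae_of_all _ fun _ => f.norm_coe_le_norm _)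

/-- `Θ` is not assumed measurable; measurability of `f (Y Θ)` is forced by `fdd_conv`, because
a non-integrable function has Bochner integral `0` both for `f` and for `f + 1`. -/
lemma aestronglyMeasurable_window [IsProbabilityMeasure ν] (hrv : IsSpectralTail μ ν X α Θ Y)
    (hmeas : ∀ t, Measurable (X t)) {h : ℕ}
    (f : BoundedContinuousFunction (Fin (2 * h + 1) → ℝ) ℝ) :
    AEStronglyMeasurable (fun ω => f (window h fun t => Y ω * Θ t ω)) ν := by
  by_contra hf
  set g := f + BoundedContinuousFunction.const _ (1 : ℝ)
  have hg : ¬AEStronglyMeasurable (fun ω => g (window h fun t => Y ω * Θ t ω)) ν := fun hg =>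
    hf ((hg.sub (aestronglyMeasurable_const (b := (1 : ℝ)))).congr
      (ae_of_all _ fun ω => by simp [g]))
  have hsum : Tendsto (fun x : ℝ => ∫ ω, g (window h fun t => X t ω / x) ∂(μ[|{ω | |X 0 ω| > x}]))
      atTop (𝓝 (0 + 1)) := by
    refine ((integral_undef fun hi => hf hi.1) ▸ hrv.tendsto_integral_window h f).add
      hrv.tendsto_cond_univ |>.congr fun x => ?_
    simp only [g, BoundedContinuousFunction.add_apply, BoundedContinuousFunction.const_apply]
    rw [integral_add (integrable_window_div hmeas f x) (integrable_const 1)]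
    simp [measureReal_def]
  have := tendsto_nhds_unique hsum
    ((integral_undef fun hi => hg hi.1) ▸ hrv.tendsto_integral_window h g)
  norm_num at this

lemma measureReal_window_mem_le_limsup [IsProbabilityMeasure ν] (hrv : IsSpectralTail μ ν X α Θ Y)
    (hmeas : ∀ t, Measurable (X t)) {h : ℕ} {E : Set (Fin (2 * h + 1) → ℝ)} {δ : ℝ} (hδ : 0 < δ)
    {u : ℕ → ℝ} (hu : Tendsto u atTop atTop) {q : ℕ → ℝ} (hq : IsBoundedUnder (· ≤ ·) atTop q)
    (hle : ∀ᶠ n in atTop,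
      (μ[{ω | window h (fun t => X t ω / u n) ∈ thickening δ E}|{ω | |X 0 ω| > u n}]).toReal
        ≤ q n) :
    ν.real {ω | window h (fun t => Y ω * Θ t ω) ∈ E} ≤ limsup q atTop := by
  set f : BoundedContinuousFunction (Fin (2 * h + 1) → ℝ) ℝ :=
    .comp _ NNReal.isometry_coe.lipschitz (thickenedIndicator hδ E)
  have hf0 (v) : 0 ≤ f v := NNReal.coe_nonneg _
  have hf1 (v) : f v ≤ 1 := NNReal.coe_le_one.2 (thickenedIndicator_le_one hδ E v)
  have hfE (v) (hv : v ∈ E) : f v = 1 := by simp [f, thickenedIndicator_one hδ E hv]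
  have hf_thick (v) : f v ≤ (thickening δ E).indicator 1 v := by
    by_cases hv : v ∈ thickening δ E
    · simpa [hv] using hf1 v
    · simp [hv, f, thickenedIndicator_zero hδ E hv]
  have hint : Integrable (fun ω => f (window h fun t => Y ω * Θ t ω)) ν :=
    .of_bound (hrv.aestronglyMeasurable_window hmeas f) 1
      (ae_of_all _ fun _ => by rw [Real.norm_of_nonneg (hf0 _)]; exact hf1 _)
  calc ν.real {ω | window h (fun t => Y ω * Θ t ω) ∈ E}
      ≤ ν.real {ω | 1 ≤ f (window h fun t => Y ω * Θ t ω)} :=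
        measureReal_mono fun ω hω => (hfE _ hω).ge
    _ ≤ ∫ ω, f (window h fun t => Y ω * Θ t ω) ∂ν := by
        simpa using mul_meas_ge_le_integral_of_nonneg (ae_of_all _ fun _ => hf0 _) hint 1
    _ = limsup (fun n => ∫ ω, f (window h fun t => X t ω / u n) ∂(μ[|{ω | |X 0 ω| > u n}]))
          atTop := ((hrv.tendsto_integral_window h f).comp hu).limsup_eq.symm
    _ ≤ limsup q atTop := by
        refine limsup_le_limsup (hle.mono fun n hn => le_trans ?_ hn)
          (isCoboundedUnder_le_of_le atTop fun n => integral_nonneg fun _ => hf0 _) hq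
        have hS : MeasurableSet {ω | window h (fun t => X t ω / u n) ∈ thickening δ E} :=
          measurable_window hmeas h (u n) isOpen_thickening.measurableSet
        rw [← measureReal_def, ← integral_indicator_one hS]
        exact integral_mono (integrable_window_div hmeas f _) ((integrable_const 1).indicator hS)
          fun ω => hf_thick _

lemma ae_forall_nonneg_mul [IsProbabilityMeasure ν] (hrv : IsSpectralTail μ ν X α Θ Y)
    (hmeas : ∀ t, Measurable (X t)) (hpos : ∀ t ω, 0 ≤ X t ω) :
    ∀ᵐ ω ∂ν, ∀ t : ℕ, 0 ≤ Y ω * Θ t ω := by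
  have hneg (t : ℕ) {δ : ℝ} (hδ : 0 < δ) : ν {ω | Y ω * Θ t ω ≤ -δ} = 0 := by
    let E : Set (Fin (2 * t + 1) → ℝ) := {v | v ⟨t + t, by omega⟩ ≤ -δ}
    have hfar (x : ℝ) (hx : 0 ≤ x) :
        {ω | window t (fun s => X s ω / x) ∈ thickening δ E} = ∅ := by
      refine eq_empty_of_forall_notMem fun ω hω => ?_
      obtain ⟨w, hw, hvw⟩ := exists_forall_abs_sub_lt_of_mem_thickening hω
      have hlt := (abs_lt.1 (hvw ⟨t + t, by omega⟩)).2
      rw [window_apply_add le_rfl] at hlt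
      have : w ⟨t + t, _⟩ ≤ -δ := hw
      linarith [div_nonneg (hpos t ω) hx]
    have hE : ν.real {ω | Y ω * Θ t ω ≤ -δ} ≤ limsup (fun _ : ℕ => (0 : ℝ)) atTop := by
      refine (measureReal_mono fun ω hω => ?_).trans
        (hrv.measureReal_window_mem_le_limsup (E := E) hmeas hδ tendsto_natCast_atTop_atTop
          isBoundedUnder_const (Eventually.of_forall fun n => ?_))
      · show window t _ ⟨t + t, _⟩ ≤ -δ
        rwa [window_apply_add le_rfl]
      · simp [hfar n n.cast_nonneg]
    rw [limsup_const] at hE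
    exact (measureReal_eq_zero_iff (measure_ne_top ν _)).1 (le_antisymm hE measureReal_nonneg)
  refine ae_all_iff.2 fun t => ?_
  have hnull : ν {ω | Y ω * Θ t ω < 0} = 0 := by
    refine measure_mono_null (fun ω (hω : Y ω * Θ t ω < 0) => ?_)
      (measure_iUnion_null fun j : ℕ => hneg t (Nat.one_div_pos_of_nat (n := j)))
    obtain ⟨j, hj⟩ := exists_nat_one_div_lt (neg_pos.2 hω)
    exact mem_iUnion.2 ⟨j, show Y ω * Θ t ω ≤ -(1 / (j + 1)) by linarith⟩
  filter_upwards [measure_eq_zero_iff_ae_notMem.1 hnull] with ω hω using not_lt.1 hω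

lemma measureReal_exists_le_mul_le_limsup [IsProbabilityMeasure ν]
    (hrv : IsSpectralTail μ ν X α Θ Y) (hmeas : ∀ t, Measurable (X t)) {a : ℕ → ℝ}
    (ha : Tendsto a atTop atTop) {r : ℕ → ℕ} (hr : Tendsto r atTop atTop) (k m : ℕ) {δ : ℝ}
    (hδ : 0 < δ) :
    ν.real {ω | ∃ t : ℕ, k ≤ t ∧ t ≤ m ∧ 1 + δ ≤ Y ω * Θ t ω} ≤
      limsup (fun n => condProb μ {ω | |X 0 ω| > a n} {ω | blockMax X k (r n) ω > a n})
        atTop := by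
  let E : Set (Fin (2 * m + 1) → ℝ) := {v | ∃ i : Fin (2 * m + 1), k + m ≤ i ∧ 1 + δ ≤ v i}
  have hsub : {ω | ∃ t : ℕ, k ≤ t ∧ t ≤ m ∧ 1 + δ ≤ Y ω * Θ t ω} ⊆
      {ω | window m (fun s => Y ω * Θ s ω) ∈ E} := by
    rintro ω ⟨t, hkt, htm, hy⟩
    exact ⟨⟨t + m, by omega⟩, by simpa using hkt, by rwa [window_apply_add htm]⟩
  -- a window `δ`-close to `E` has an exceedance of `a n` at a time in `[k, m] ⊆ [k, r n]`
  have hblock : ∀ᶠ n in atTop, {ω | window m (fun s => X s ω / a n) ∈ thickening δ E} ⊆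
      {ω | blockMax X k (r n) ω > a n} := by
    filter_upwards [ha.eventually_gt_atTop 0, hr.eventually_ge_atTop m] with n han hrn ω hω
    obtain ⟨w, ⟨i, hki, hwi⟩, hvw⟩ := exists_forall_abs_sub_lt_of_mem_thickening hω
    have hexc : 1 < X ((i : ℕ) - m) ω / a n := by
      have := (abs_lt.1 (hvw i)).1
      simp only [window] at this
      linarith
    have him : (i : ℕ) ≤ 2 * m := Nat.lt_succ_iff.1 i.isLt
    exact ((one_lt_div han).1 hexc).trans_le (le_blockMax X (by omega) (by omega) ω)
  refine (measureReal_mono hsub).trans (hrv.measureReal_window_mem_le_limsup hmeas hδ ha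
    (isBoundedUnder_of ⟨1, fun n => measureReal_le_one⟩) (hblock.mono fun n hn => ?_))
  exact ENNReal.toReal_mono (measure_ne_top _ _) (measure_mono hn)

lemma measure_exists_one_lt_mul_le [IsProbabilityMeasure ν] (hrv : IsSpectralTail μ ν X α Θ Y)
    (hmeas : ∀ t, Measurable (X t)) {a : ℕ → ℝ} (ha : Tendsto a atTop atTop) {r : ℕ → ℕ}
    (hr : Tendsto r atTop atTop) (k : ℕ) :
    ν {ω | ∃ t ≥ k, 1 < Y ω * Θ t ω} ≤ ENNReal.ofReal
      (limsup (fun n => condProb μ {ω | |X 0 ω| > a n} {ω | blockMax X k (r n) ω > a n})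
        atTop) := by
  let C (i : ℕ) := {ω | ∃ t : ℕ, k ≤ t ∧ t ≤ k + i ∧ 1 + 1 / (i + 1 : ℝ) ≤ Y ω * Θ t ω}
  have hC : Monotone C := monotone_nat_of_le_succ fun i ω ⟨t, hkt, hti, hy⟩ =>
    ⟨t, hkt, by omega, le_trans (by gcongr; linarith) hy⟩
  have hsub : {ω | ∃ t ≥ k, 1 < Y ω * Θ t ω} ⊆ ⋃ i, C i := by
    rintro ω ⟨t, hkt, hy⟩
    obtain ⟨j, hj⟩ := exists_nat_one_div_lt (sub_pos.2 hy)
    refine mem_iUnion.2 ⟨max (t - k) j, t, hkt, by omega, ?_⟩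
    have : 1 / ((max (t - k) j : ℕ) + 1 : ℝ) ≤ 1 / (j + 1) := by gcongr; exact le_max_right _ _
    linarith
  refine (measure_mono hsub).trans ?_
  rw [hC.measure_iUnion]
  refine iSup_le fun i => ?_
  rw [← ofReal_measureReal]
  exact ENNReal.ofReal_le_ofReal (hrv.measureReal_exists_le_mul_le_limsup hmeas ha hr k (k + i)
    Nat.one_div_pos_of_nat)

lemma measure_frequently_one_lt_mul_eq_zero [IsProbabilityMeasure ν]
    (hrv : IsSpectralTail μ ν X α Θ Y) (hmeas : ∀ t, Measurable (X t)) {a : ℕ → ℝ}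
    (ha : Tendsto a atTop atTop) {r : ℕ → ℕ} (hr : Tendsto r atTop atTop)
    (hAC : Tendsto (fun k : ℕ => limsup (fun n =>
      condProb μ {ω | |X 0 ω| > a n} {ω | blockMax X k (r n) ω > a n}) atTop) atTop (𝓝 0)) :
    ν {ω | ∃ᶠ t : ℕ in atTop, 1 < Y ω * Θ t ω} = 0 := by
  refine le_antisymm (ge_of_tendsto' (by simpa using ENNReal.tendsto_ofReal hAC) fun k => ?_)
    bot_le
  exact (measure_mono fun ω hω => frequently_atTop.1 hω k).trans
    (hrv.measure_exists_one_lt_mul_le hmeas ha hr k)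

/-- Since `Y` is independent of `Θ` and unbounded, `Θ_t > c` infinitely often would make
`Y Θ_t > 1` infinitely often with positive probability. -/
lemma measure_frequently_lt_eq_zero (hrv : IsSpectralTail μ ν X α Θ Y)
    (hN : ν {ω | ∃ᶠ t : ℕ in atTop, 1 < Y ω * Θ t ω} = 0) {c : ℝ} (hc : 0 < c) :
    ν {ω | ∃ᶠ t : ℕ in atTop, c < Θ t ω} = 0 := by
  let T : Set (ℤ → ℝ) := {g | ∃ᶠ t : ℕ in atTop, c < g t}
  have hT : MeasurableSet T := by
    simp only [T, frequently_atTop, ofPred_forall, ofPred_exists]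
    exact .iInter fun k => .iUnion fun t =>
      (MeasurableSet.const (k ≤ t)).inter
        (measurableSet_lt measurable_const (measurable_pi_apply _))
  set y := 1 + c⁻¹
  have hy : 1 < y := lt_add_of_pos_right _ (inv_pos.2 hc)
  have hYy : ν (Y ⁻¹' Ioi y) ≠ 0 := fun h0 => by
    have := hrv.pareto_tail y hy
    rw [show {ω | Y ω > y} = Y ⁻¹' Ioi y from rfl, h0, ENNReal.toReal_zero] at this
    exact (Real.rpow_pos_of_pos (by linarith) _).ne this
  have hinter : ν (Y ⁻¹' Ioi y ∩ (fun ω t => Θ t ω) ⁻¹' T) = 0 := by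
    refine measure_mono_null (fun ω ⟨hY, hΘ⟩ => Frequently.mono hΘ fun t ht => ?_) hN
    calc (1 : ℝ) < y * c := by rw [add_mul, inv_mul_cancel₀ hc.ne']; linarith
      _ < Y ω * Θ t ω := mul_lt_mul'' hY ht (by linarith) hc.le
  rw [hrv.indep.measure_inter_preimage_eq_mul _ _ measurableSet_Ioi hT] at hinter
  exact (mul_eq_zero.1 hinter).resolve_left hYy

end IsSpectralTail

theorem tail_process_tendsto_zero_forward_general
    (μ : Measure Ω) [IsProbabilityMeasure μ]
    {Ω' : Type*} [MeasurableSpace Ω'] (ν : Measure Ω') [IsProbabilityMeasure ν]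
    (X : ℤ → Ω → ℝ) (hmeas : ∀ t, Measurable (X t)) (hpos : ∀ t ω, 0 ≤ X t ω)
    (α : ℝ) (Θ : ℤ → Ω' → ℝ) (Y : Ω' → ℝ)
    (hrv : IsSpectralTail μ ν X α Θ Y)
    (a : ℕ → ℝ)
    (ha : Tendsto (fun n : ℕ => (n : ℝ) * (μ {ω | |X 0 ω| > a n}).toReal) atTop (𝓝 1))
    (r : ℕ → ℕ) (hr : Tendsto r atTop atTop)
    (hAC : ∀ x : ℝ, 0 < x → AntiClustering μ X (fun n => x * a n) r) :
    (∀ᵐ ω ∂ν, Tendsto (fun t : ℕ => Y ω * Θ (t : ℤ) ω) atTop (𝓝 0)) ∧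
    (∀ᵐ ω ∂ν, Tendsto (fun t : ℕ => Θ (t : ℤ) ω) atTop (𝓝 0)) := by
  have ha_top : Tendsto a atTop atTop :=
    tendsto_atTop_of_tendsto_nat_mul_measureReal hrv.measure_abs_gt_ne_zero ha
  have hAC₁ : Tendsto (fun k : ℕ => limsup (fun n =>
      condProb μ {ω | |X 0 ω| > a n} {ω | blockMax X k (r n) ω > a n}) atTop) atTop (𝓝 0) := by
    simpa [AntiClustering, abs_of_nonneg (hpos 0 _)] using hAC 1 one_pos
  have hN := hrv.measure_frequently_one_lt_mul_eq_zero hmeas ha_top hr hAC₁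
  have hsmall : ∀ᵐ ω ∂ν, ∀ j : ℕ, ¬∃ᶠ t : ℕ in atTop, 1 / (j + 1 : ℝ) < Θ t ω :=
    ae_all_iff.2 fun j => measure_eq_zero_iff_ae_notMem.1
      (hrv.measure_frequently_lt_eq_zero hN Nat.one_div_pos_of_nat)
  have hΘ : ∀ᵐ ω ∂ν, Tendsto (fun t : ℕ => Θ t ω) atTop (𝓝 0) := by
    filter_upwards [hrv.ae_forall_nonneg_mul hmeas hpos, hrv.pareto_ge_one, hsmall]
      with ω hnonneg hY hfreq
    refine tendsto_zero_of_nonneg_of_forall_eventually_le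
      (fun t => nonneg_of_mul_nonneg_right (hnonneg t) (by linarith)) fun j => ?_
    simpa using not_frequently.1 (hfreq j)
  exact ⟨hΘ.mono fun ω h => by simpa using h.const_mul (Y ω), hΘ⟩

/-- Lemma, forward part: for a non-negative stationary regularly varying
sequence satisfying the anti-clustering condition with `u_n = x a_n` for all `x > 0`,
`Y_t = Y Θ_t → 0` a.s. and `Θ_t → 0` a.s. as `t → +∞`. -/
theorem tail_process_tendsto_zero_forward
    (μ : Measure Ω) [IsProbabilityMeasure μ]
    {Ω' : Type*} [MeasurableSpace Ω'] (ν : Measure Ω') [IsProbabilityMeasure ν]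
    (X : ℤ → Ω → ℝ) (hmeas : ∀ t, Measurable (X t)) (hpos : ∀ t ω, 0 ≤ X t ω)
    (hstat : IsStationarySeq μ X)
    (α : ℝ) (Θ : ℤ → Ω' → ℝ) (Y : Ω' → ℝ)
    (hrv : IsSpectralTail μ ν X α Θ Y)
    (a : ℕ → ℝ)
    (ha : Tendsto (fun n : ℕ => (n : ℝ) * (μ {ω | |X 0 ω| > a n}).toReal) atTop (𝓝 1))
    (r : ℕ → ℕ) (hr : Tendsto r atTop atTop)
    (hk : Tendsto (fun n => n / r n) atTop atTop)
    (hAC : ∀ x : ℝ, 0 < x → AntiClustering μ X (fun n => x * a n) r) :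
    (∀ᵐ ω ∂ν, Tendsto (fun t : ℕ => Y ω * Θ (t : ℤ) ω) atTop (𝓝 0)) ∧
    (∀ᵐ ω ∂ν, Tendsto (fun t : ℕ => Θ (t : ℤ) ω) atTop (𝓝 0)) :=
  tail_process_tendsto_zero_forward_general μ ν X hmeas hpos α Θ Y hrv a ha r hr hAC
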